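/- arXiv:1906.09815 — 7 statements merged into one kernel-verified Lean document; each statement's English description precedes it below -/
import Mathlib

section
/- Let F be a periodic non-autonomous system with period m that is mean equicontinuous. If F is mean expansive, then for each k ∈ ℕ⁺ the iterate system F^k is mean expansive. -/
open Filter

def iterN {X : Type*} (f : ℕ → X → X) : ℕ → X → X
  | 0 => id
  | n + 1 => f (n + 1) ∘ iterN f n

def MeanEquicont {X : Type*} [MetricSpace X] (f : ℕ → X → X) : Prop :=
  ∀ ε > (0:ℝ), ∃ δ > (0:ℝ), ∀ x y : ℕ → X,
    limsup (fun n : ℕ => (n:ℝ)⁻¹ * ∑ i ∈ Finset.range n, dist (x i) (y i)) atTop < δ →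
    ∀ j : ℕ, 1 ≤ j →
      limsup (fun n : ℕ => (n:ℝ)⁻¹ * ∑ i ∈ Finset.range n, dist (f j (x i)) (f j (y i))) atTop < ε

namespace Stmt5Aux

lemma iterN_succ {X : Type*} (f : ℕ → X → X) (n : ℕ) (x : X) :
    iterN f (n+1) x = f (n+1) (iterN f n x) := rfl

lemma iterN_add {X : Type*} (f : ℕ → X → X) (n : ℕ) :
    ∀ (v : ℕ) (x : X), iterN f (n + v) x = iterN (fun t => f (n + t)) v (iterN f n x)
  | 0, x => rfl
  | v+1, x => by
    show f (n + v + 1) (iterN f (n + v) x) = _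
    rw [iterN_add f n v x]
    rfl

lemma iterN_congr {X : Type*} (g g' : ℕ → X → X) :
    ∀ v : ℕ, (∀ t, 1 ≤ t → t ≤ v → g t = g' t) → ∀ x, iterN g v x = iterN g' v x
  | 0, _, x => rfl
  | v+1, h, x => by
    show g (v+1) (iterN g v x) = g' (v+1) (iterN g' v x)
    rw [iterN_congr g g' v (fun t h1 h2 => h t h1 (h2.trans (Nat.le_succ v))) x,
      h (v+1) (Nat.succ_le_succ (Nat.zero_le v)) le_rfl]

lemma sum_class_le (w : ℕ → ℝ) (hw : ∀ i, 0 ≤ w i) (p s n : ℕ) (hs : s < p) :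
    ∑ q ∈ Finset.range n, w (q*p+s) ≤ ∑ i ∈ Finset.range (n*p), w i := by
  have hinj : Set.InjOn (fun q => q*p+s) (Finset.range n) := by
    intro q1 _ q2 _ h
    have hp : 0 < p := Nat.pos_of_ne_zero (by omega)
    simp only at h
    exact Nat.eq_of_mul_eq_mul_right hp (by omega)
  rw [← Finset.sum_image hinj]
  apply Finset.sum_le_sum_of_subset_of_nonneg
  · intro i hi
    simp only [Finset.mem_image, Finset.mem_range] at hi ⊢
    obtain ⟨q, hq, rfl⟩ := hi
    calc q*p+s < q*p+p := by omega
    _ = (q+1)*p := by ring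
    _ ≤ n*p := Nat.mul_le_mul_right p (by omega)
  · intro i _ _; exact hw i

lemma sum_range_mul_eq (w : ℕ → ℝ) (n p : ℕ) :
    ∑ i ∈ Finset.range (n*p), w i = ∑ s ∈ Finset.range p, ∑ q ∈ Finset.range n, w (q*p+s) := by
  rw [Finset.sum_comm]
  induction n with
  | zero => simp
  | succ n ih =>
    have : (n+1)*p = n*p + p := by ring
    rw [this, Finset.sum_range_add, ih, Finset.sum_range_succ]

lemma sum_headswap (w w' : ℕ → ℝ) (h : ∀ q, 1 ≤ q → w q = w' q) (h0 : 0 ≤ w' 0)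
    (hw0 : 0 ≤ w 0) (n : ℕ) :
    ∑ q ∈ Finset.range n, w q ≤ (∑ q ∈ Finset.range n, w' q) + w 0 := by
  have hpt : ∀ q ∈ Finset.range n, w q ≤ w' q + (if q = 0 then w 0 else 0) := by
    intro q _
    rcases Nat.eq_zero_or_pos q with rfl | hq
    · have h' : (if (0:ℕ) = 0 then w 0 else 0) = w 0 := if_pos rfl
      rw [h']; linarith
    · rw [h q hq]; simp [Nat.pos_iff_ne_zero.mp hq]
  calc ∑ q ∈ Finset.range n, w q
      ≤ ∑ q ∈ Finset.range n, (w' q + (if q = 0 then w 0 else 0)) := Finset.sum_le_sum hpt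
    _ = (∑ q ∈ Finset.range n, w' q) + ∑ q ∈ Finset.range n, (if q = 0 then w 0 else 0) :=
        Finset.sum_add_distrib
    _ ≤ (∑ q ∈ Finset.range n, w' q) + w 0 := by
        gcongr
        rw [Finset.sum_ite_eq' (Finset.range n) 0 (fun _ => w 0)]
        split <;> simp [hw0]

lemma chain {X : Type*} [MetricSpace X] (f : ℕ → X → X) (hme : MeanEquicont f) :
    ∀ (V : ℕ) (ε : ℝ), 0 < ε → ∃ δ : ℝ, 0 < δ ∧ δ ≤ ε ∧
      ∀ v ≤ V, ∀ g : ℕ → X → X, (∀ t, 1 ≤ t → ∃ j, 1 ≤ j ∧ g t = f j) →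
      ∀ x y : ℕ → X,
      limsup (fun n : ℕ => (n:ℝ)⁻¹ * ∑ i ∈ Finset.range n, dist (x i) (y i)) atTop < δ →
      limsup (fun n : ℕ => (n:ℝ)⁻¹ * ∑ i ∈ Finset.range n,
        dist (iterN g v (x i)) (iterN g v (y i))) atTop < ε := by
  intro V
  induction V with
  | zero =>
    intro ε hε
    refine ⟨ε, hε, le_rfl, ?_⟩
    intro v hv g hg x y h
    interval_cases v
    simpa [iterN] using h
  | succ V ih =>
    intro ε hε
    obtain ⟨δ₂, hδ₂, H⟩ := hme ε hε
    obtain ⟨δ, hδ, hδle, Hδ⟩ := ih (min δ₂ ε) (lt_min hδ₂ hε)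
    refine ⟨δ, hδ, hδle.trans (min_le_right _ _), ?_⟩
    intro v hv g hg x y h
    rcases eq_or_lt_of_le hv with rfl | hlt
    · have h1 := Hδ V le_rfl g hg x y h
      obtain ⟨j, hj1, hgj⟩ := hg (V+1) (by omega)
      have h2 := H (fun i => iterN g V (x i)) (fun i => iterN g V (y i))
        (h1.trans_le (min_le_left _ _)) j hj1
      have e : ∀ z : X, iterN g (V+1) z = f j (iterN g V z) := fun z => by
        rw [iterN_succ, hgj]
      simpa only [e] using h2
    · exact (Hδ v (Nat.lt_succ_iff.mp hlt) g hg x y h).trans_le (min_le_right _ _)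

end Stmt5Aux

set_option maxHeartbeats 2000000 in
theorem stmt5 {X : Type*} [MetricSpace X] (f : ℕ → X → X) (m : ℕ) (hm : 1 ≤ m)
    (hper : ∀ i j : ℕ, 1 ≤ i → 1 ≤ j → f (m * i + j) = f j)
    (hme : MeanEquicont f)
    (c : ℝ) (hc : c ∈ Set.Ioo (0:ℝ) 1)
    (hexp : ∀ x y : X, x ≠ y →
      c < limsup (fun n : ℕ => (n:ℝ)⁻¹ * ∑ i ∈ Finset.range n,
        dist (iterN f i x) (iterN f i y)) atTop) :
    ∀ k : ℕ, 1 ≤ k → ∃ d ∈ Set.Ioo (0:ℝ) 1, ∀ x y : X, x ≠ y →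
      d < limsup (fun n : ℕ => (n:ℝ)⁻¹ * ∑ i ∈ Finset.range n,
        dist (iterN f (i * k) x) (iterN f (i * k) y)) atTop := by
  intro k hk
  obtain ⟨hc0, hc1⟩ := hc
  have hk0 : 0 < k := hk
  have hm0 : 0 < m := hm
  have hmR : (0:ℝ) < m := by exact_mod_cast hm0
  obtain ⟨δ, hδ0, hδle, Hδ⟩ := Stmt5Aux.chain f hme k (c/4) (by linarith)
  set M := m * k with hMdef
  have hM0 : 0 < M := Nat.mul_pos hm0 hk0
  have hMR : (0:ℝ) < M := by exact_mod_cast hM0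
  refine ⟨min (δ / (2*m)) (c/2), ⟨lt_min (by positivity) (by linarith),
    lt_of_le_of_lt (min_le_right _ _) (by linarith)⟩, ?_⟩
  intro x y hxy
  by_contra hcon
  push_neg at hcon
  set a : ℕ → ℝ := fun i => dist (iterN f i x) (iterN f i y) with hadef
  have ha0 : ∀ i, 0 ≤ a i := fun i => dist_nonneg
  set A : ℕ → ℝ := fun n => (n:ℝ)⁻¹ * ∑ i ∈ Finset.range n, a i with hAdef
  set B : ℕ → ℝ := fun n => (n:ℝ)⁻¹ * ∑ q ∈ Finset.range n, a (q * k) with hBdef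
  have hexpA : c < limsup A atTop := hexp x y hxy
  have hconB : limsup B atTop ≤ min (δ / (2*m)) (c/2) := hcon
  -- generic facts about averages
  have avg_nonneg : ∀ (w : ℕ → ℝ), (∀ i, 0 ≤ w i) → ∀ n : ℕ,
      0 ≤ (n:ℝ)⁻¹ * ∑ i ∈ Finset.range n, w i := fun w hw n =>
    mul_nonneg (by positivity) (Finset.sum_nonneg fun i _ => hw i)
  have cob : ∀ (w : ℕ → ℝ), (∀ n, 0 ≤ w n) → IsCoboundedUnder (· ≤ ·) atTop w :=
    fun w hw => isCoboundedUnder_le_of_le atTop (x := 0) hw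
  -- A is bounded
  have hbddA : IsBoundedUnder (· ≤ ·) atTop A := by
    by_contra hb
    have hempty : {r : ℝ | ∀ᶠ n : ℕ in atTop, A n ≤ r} = ∅ := by
      apply Set.eq_empty_iff_forall_notMem.mpr
      intro r hr
      exact hb ⟨r, eventually_map.2 hr⟩
    rw [limsup_eq, hempty, Real.sInf_empty] at hexpA
    linarith
  -- partial sum bound
  obtain ⟨C, hC⟩ : ∃ C, ∀ᶠ n : ℕ in atTop, A n ≤ C := by
    obtain ⟨C, hC⟩ := hbddA
    exact ⟨C, eventually_map.1 hC⟩
  obtain ⟨N0, hN0⟩ := eventually_atTop.mp hC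
  set N1 := max N0 1 with hN1def
  set D : ℝ := max C 0 + ∑ i ∈ Finset.range N1, a i with hDdef
  have hsum1nn : 0 ≤ ∑ i ∈ Finset.range N1, a i := Finset.sum_nonneg fun i _ => ha0 i
  have hD0 : 0 ≤ D := add_nonneg (le_max_right C 0) hsum1nn
  have hS : ∀ N : ℕ, ∑ i ∈ Finset.range N, a i ≤ D * (N+1) := by
    intro N
    rcases le_or_gt N N1 with h | h
    · calc ∑ i ∈ Finset.range N, a i
          ≤ ∑ i ∈ Finset.range N1, a i :=
            Finset.sum_le_sum_of_subset_of_nonneg (Finset.range_subset_range.2 h) fun i _ _ => ha0 i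
      _ ≤ D := le_add_of_nonneg_left (le_max_right C 0)
      _ ≤ D * (N+1) := le_mul_of_one_le_right hD0 (by have : (0:ℝ) ≤ (N:ℝ) := Nat.cast_nonneg N; linarith)
    · have hN1le : 1 ≤ N := le_trans (le_max_right N0 1) h.le
      have hAN := hN0 N (le_trans (le_max_left N0 1) h.le)
      have hNpos : (0:ℝ) < N := by exact_mod_cast hN1le
      have hSN : ∑ i ∈ Finset.range N, a i ≤ C * N := by
        have h2 : (N:ℝ) * ((N:ℝ)⁻¹ * ∑ i ∈ Finset.range N, a i) ≤ (N:ℝ) * C :=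
          mul_le_mul_of_nonneg_left hAN hNpos.le
        rw [← mul_assoc, mul_inv_cancel₀ hNpos.ne', one_mul] at h2
        linarith
      calc ∑ i ∈ Finset.range N, a i ≤ C * N := hSN
      _ ≤ max C 0 * (N+1) := by
          apply mul_le_mul (le_max_left C 0) (by linarith) hNpos.le (le_max_right C 0)
      _ ≤ D * (N+1) := by
          apply mul_le_mul_of_nonneg_right _ (by positivity)
          exact le_add_of_nonneg_right hsum1nn
  -- class averages are bounded
  have hclassbdd : ∀ p s : ℕ, s < p → ∀ n : ℕ, 1 ≤ n →
      (n:ℝ)⁻¹ * ∑ q ∈ Finset.range n, a (q*p+s) ≤ D * (p+1) := by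
    intro p s hsp n hn
    have hnR : (1:ℝ) ≤ n := by exact_mod_cast hn
    have h1 : ∑ q ∈ Finset.range n, a (q*p+s) ≤ D * ((n:ℝ)*(p+1)) := by
      calc ∑ q ∈ Finset.range n, a (q*p+s)
          ≤ ∑ i ∈ Finset.range (n*p), a i := Stmt5Aux.sum_class_le a ha0 p s n hsp
      _ ≤ D * ((n*p : ℕ)+1) := hS (n*p)
      _ ≤ D * ((n:ℝ)*(p+1)) := by
          apply mul_le_mul_of_nonneg_left _ hD0
          push_cast
          nlinarith
    calc (n:ℝ)⁻¹ * ∑ q ∈ Finset.range n, a (q*p+s)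
        ≤ (n:ℝ)⁻¹ * (D * ((n:ℝ)*(p+1))) := mul_le_mul_of_nonneg_left h1 (by positivity)
    _ = D * (p+1) * ((n:ℝ)⁻¹ * n) := by ring
    _ = D * (p+1) := by rw [inv_mul_cancel₀ (by linarith), mul_one]
  -- B bounded, eventual bound
  have hBbdd : IsBoundedUnder (· ≤ ·) atTop B := by
    refine ⟨D * (k+1), eventually_map.2 ?_⟩
    filter_upwards [eventually_ge_atTop 1] with n hn
    have := hclassbdd k 0 hk0 n hn
    simpa using this
  have hBev : ∀ᶠ n : ℕ in atTop, B n < 3*δ/(4*m) := by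
    apply eventually_lt_of_limsup_lt _ hBbdd
    calc limsup B atTop ≤ min (δ / (2*m)) (c/2) := hconB
    _ ≤ δ/(2*m) := min_le_left _ _
    _ < 3*δ/(4*m) := by
        rw [div_lt_div_iff₀ (by positivity) (by positivity)]
        nlinarith
  have hmul : Tendsto (fun n : ℕ => n * m) atTop atTop :=
    tendsto_atTop_mono (fun n => Nat.le_mul_of_pos_right n hm0) tendsto_id
  have hBev2 : ∀ᶠ n : ℕ in atTop, B (n*m) < 3*δ/(4*m) := hmul.eventually hBev
  -- chain hypothesis for each residue u < m
  have hchainhyp : ∀ u : ℕ, u < m →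
      limsup (fun n : ℕ => (n:ℝ)⁻¹ * ∑ q ∈ Finset.range n, a ((q*m+u)*k)) atTop < δ := by
    intro u hu
    have key : ∀ᶠ n : ℕ in atTop, (n:ℝ)⁻¹ * ∑ q ∈ Finset.range n, a ((q*m+u)*k) ≤ 3*δ/4 := by
      filter_upwards [hBev2, eventually_ge_atTop 1] with n hBn hn1
      have hnR : (1:ℝ) ≤ n := by exact_mod_cast hn1
      have hsum : ∑ q ∈ Finset.range n, a ((q*m+u)*k) ≤ ∑ i ∈ Finset.range (n*m), a (i*k) := by
        have := Stmt5Aux.sum_class_le (fun i => a (i*k)) (fun i => ha0 _) m u n hu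
        simpa using this
      have hinv : (n:ℝ)⁻¹ = (m:ℝ) * (((n*m : ℕ)):ℝ)⁻¹ := by
        have hnne : (n:ℝ) ≠ 0 := by linarith
        rw [Nat.cast_mul, mul_inv, ← mul_assoc, mul_comm (m:ℝ), mul_assoc,
          mul_inv_cancel₀ hmR.ne', mul_one]
      have hBval : B (n*m) = (((n*m : ℕ)):ℝ)⁻¹ * ∑ i ∈ Finset.range (n*m), a (i*k) := rfl
      calc (n:ℝ)⁻¹ * ∑ q ∈ Finset.range n, a ((q*m+u)*k)
          ≤ (n:ℝ)⁻¹ * ∑ i ∈ Finset.range (n*m), a (i*k) :=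
            mul_le_mul_of_nonneg_left hsum (by positivity)
        _ = (m:ℝ) * B (n*m) := by rw [hinv, hBval]; ring
        _ ≤ (m:ℝ) * (3*δ/(4*m)) := mul_le_mul_of_nonneg_left hBn.le hmR.le
        _ = 3*δ/4 := by field_simp
    have hlim : limsup (fun n : ℕ => (n:ℝ)⁻¹ * ∑ q ∈ Finset.range n, a ((q*m+u)*k)) atTop
        ≤ 3*δ/4 :=
      limsup_le_of_le (cob _ fun n => avg_nonneg (fun q => a ((q*m+u)*k)) (fun q => ha0 _) n) key
    exact lt_of_le_of_lt hlim (by linarith)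
  -- per-class eventual bound
  have hW : ∀ s : ℕ, s < M → ∀ᶠ n : ℕ in atTop,
      (n:ℝ)⁻¹ * ∑ q ∈ Finset.range n, a (q*M+s) < c/4 + (n:ℝ)⁻¹ * a s := by
    intro s hs
    set u := s / k with hu
    set v := s % k with hv
    have huv : u*k + v = s := Nat.div_add_mod' s k
    have hum : u < m := Nat.div_lt_of_lt_mul (by rw [mul_comm] at hMdef; omega)
    have hvk : v < k := Nat.mod_lt _ hk0
    set g : ℕ → X → X := fun t => f (u*k + t) with hg
    have hgok : ∀ t, 1 ≤ t → ∃ j, 1 ≤ j ∧ g t = f j := fun t ht => ⟨u*k+t, by omega, rfl⟩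
    set W : ℕ → ℝ := fun q =>
      dist (iterN g v (iterN f ((q*m+u)*k) x)) (iterN g v (iterN f ((q*m+u)*k) y)) with hWdef
    have hW0 : ∀ q, 0 ≤ W q := fun q => dist_nonneg
    have hchain : limsup (fun n : ℕ => (n:ℝ)⁻¹ * ∑ q ∈ Finset.range n, W q) atTop < c/4 :=
      Hδ v hvk.le g hgok (fun q => iterN f ((q*m+u)*k) x) (fun q => iterN f ((q*m+u)*k) y)
        (hchainhyp u hum)
    have hWeq : ∀ q : ℕ, 1 ≤ q → W q = a (q*M + s) := by
      intro q hq
      have hidx : q*M + s = (q*m+u)*k + v := by rw [hMdef, ← huv]; ring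
      have e2 : ∀ z, iterN (fun t => f ((q*m+u)*k + t)) v z = iterN g v z := by
        intro z
        apply Stmt5Aux.iterN_congr
        intro t ht1 ht2
        have hidx2 : (q*m+u)*k + t = m*(q*k) + (u*k + t) := by ring
        rw [hidx2, hper (q*k) (u*k+t) (Nat.mul_pos hq hk0) (by omega)]
      have e3 : ∀ z, iterN f ((q*m+u)*k + v) z
          = iterN g v (iterN f ((q*m+u)*k) z) := by
        intro z
        rw [Stmt5Aux.iterN_add f _ v z, e2]
      show W q = dist (iterN f (q*M+s) x) (iterN f (q*M+s) y)
      rw [hidx, e3, e3]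
    have hWbdd : IsBoundedUnder (· ≤ ·) atTop
        (fun n : ℕ => (n:ℝ)⁻¹ * ∑ q ∈ Finset.range n, W q) := by
      refine ⟨D*(M+1) + W 0, eventually_map.2 ?_⟩
      filter_upwards [eventually_ge_atTop 1] with n hn
      have hnR : (1:ℝ) ≤ n := by exact_mod_cast hn
      have hle : ∑ q ∈ Finset.range n, W q ≤ (∑ q ∈ Finset.range n, a (q*M+s)) + W 0 :=
        Stmt5Aux.sum_headswap W (fun q => a (q*M+s)) hWeq (ha0 _) (hW0 0) n
      calc (n:ℝ)⁻¹ * ∑ q ∈ Finset.range n, W q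
          ≤ (n:ℝ)⁻¹ * ((∑ q ∈ Finset.range n, a (q*M+s)) + W 0) :=
            mul_le_mul_of_nonneg_left hle (by positivity)
        _ = (n:ℝ)⁻¹ * (∑ q ∈ Finset.range n, a (q*M+s)) + (n:ℝ)⁻¹ * W 0 := by ring
        _ ≤ D*(M+1) + W 0 := by
            have h1 := hclassbdd M s hs n hn
            have h2 : (n:ℝ)⁻¹ * W 0 ≤ W 0 := by
              have : (n:ℝ)⁻¹ ≤ 1 := by
                rw [inv_le_one_iff₀]; right; exact hnR
              nlinarith [hW0 0]
            linarith
    have hWev : ∀ᶠ n : ℕ in atTop, (n:ℝ)⁻¹ * ∑ q ∈ Finset.range n, W q < c/4 :=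
      eventually_lt_of_limsup_lt hchain hWbdd
    filter_upwards [hWev, eventually_ge_atTop 1] with n hWn hn1
    have hle : ∑ q ∈ Finset.range n, a (q*M+s) ≤ (∑ q ∈ Finset.range n, W q) + a s := by
      have := Stmt5Aux.sum_headswap (fun q => a (q*M+s)) W
        (fun q hq => (hWeq q hq).symm) (hW0 0) (ha0 _) n
      simpa using this
    calc (n:ℝ)⁻¹ * ∑ q ∈ Finset.range n, a (q*M+s)
        ≤ (n:ℝ)⁻¹ * ((∑ q ∈ Finset.range n, W q) + a s) :=
          mul_le_mul_of_nonneg_left hle (by positivity)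
      _ = (n:ℝ)⁻¹ * (∑ q ∈ Finset.range n, W q) + (n:ℝ)⁻¹ * a s := by ring
      _ < c/4 + (n:ℝ)⁻¹ * a s := by linarith
  -- combine over all residue classes
  have hn_tendsto : Tendsto (fun N : ℕ => N / M + 1) atTop atTop := by
    rw [tendsto_atTop_atTop]
    intro b
    refine ⟨b * M, fun N hN => ?_⟩
    have : b ≤ N / M := (Nat.le_div_iff_mul_le hM0).2 hN
    omega
  have hallW : ∀ᶠ n : ℕ in atTop, ∀ s ∈ Finset.range M,
      (n:ℝ)⁻¹ * ∑ q ∈ Finset.range n, a (q*M+s) < c/4 + (n:ℝ)⁻¹ * a s := by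
    rw [eventually_all_finset]
    intro s hs
    exact hW s (Finset.mem_range.1 hs)
  have hsmall : ∀ᶠ n : ℕ in atTop,
      (2/(M:ℝ)) * ((n:ℝ)⁻¹ * ∑ s ∈ Finset.range M, a s) ≤ c/4 := by
    have ht : Tendsto (fun n : ℕ => (2/(M:ℝ)) * ((n:ℝ)⁻¹ * ∑ s ∈ Finset.range M, a s))
        atTop (nhds 0) := by
      have h1 : Tendsto (fun n : ℕ => (n:ℝ)⁻¹) atTop (nhds 0) :=
        tendsto_inv_atTop_zero.comp tendsto_natCast_atTop_atTop
      have := (h1.mul_const (∑ s ∈ Finset.range M, a s)).const_mul (2/(M:ℝ))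
      simpa [mul_assoc] using this
    exact (ht.eventually_lt_const (by linarith)).mono fun n hn => hn.le
  have hfin : ∀ᶠ N in atTop, A N ≤ 3*c/4 := by
    filter_upwards [hn_tendsto.eventually hallW, hn_tendsto.eventually hsmall,
      eventually_ge_atTop M, eventually_ge_atTop 1] with N h1 h2 hNM hN1
    set n := N / M + 1 with hndef
    have hdm := Nat.div_add_mod N M
    have hmod := Nat.mod_lt N hM0
    have hA : n * M = M*(N/M) + M := by rw [hndef]; ring
    have hNn : N ≤ n * M := by omega
    have hnM2N : n * M ≤ 2*N := by omega
    have hNR : (1:ℝ) ≤ N := by exact_mod_cast hN1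
    have hnR : (1:ℝ) ≤ n := by exact_mod_cast Nat.le_add_left 1 (N/M)
    have step1 : ∑ i ∈ Finset.range N, a i
        ≤ ∑ s ∈ Finset.range M, ∑ q ∈ Finset.range n, a (q*M+s) := by
      calc ∑ i ∈ Finset.range N, a i
          ≤ ∑ i ∈ Finset.range (n*M), a i :=
            Finset.sum_le_sum_of_subset_of_nonneg (Finset.range_subset_range.2 hNn)
              fun i _ _ => ha0 i
        _ = _ := Stmt5Aux.sum_range_mul_eq a n M
    have hNinv : (N:ℝ)⁻¹ ≤ 2/(M:ℝ) * (n:ℝ)⁻¹ := by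
      have h2 : ((M:ℝ)*(n:ℝ)) ≤ 2*(N:ℝ) := by
        rw [Nat.mul_comm] at hnM2N
        exact_mod_cast hnM2N
      have h3 : (N:ℝ)⁻¹ ≤ 2/((M:ℝ)*(n:ℝ)) := by
        rw [inv_eq_one_div, div_le_div_iff₀ (by linarith) (by positivity)]
        linarith
      have he : 2/((M:ℝ)*(n:ℝ)) = 2/(M:ℝ) * (n:ℝ)⁻¹ := by
        rw [div_eq_mul_inv, div_eq_mul_inv, mul_inv, mul_assoc]
      rw [← he]
      exact h3
    have hMne : (M:ℝ) ≠ 0 := hMR.ne'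
    calc A N = (N:ℝ)⁻¹ * ∑ i ∈ Finset.range N, a i := rfl
      _ ≤ (N:ℝ)⁻¹ * ∑ s ∈ Finset.range M, ∑ q ∈ Finset.range n, a (q*M+s) :=
          mul_le_mul_of_nonneg_left step1 (by positivity)
      _ ≤ (2/(M:ℝ) * (n:ℝ)⁻¹) * ∑ s ∈ Finset.range M, ∑ q ∈ Finset.range n, a (q*M+s) :=
          mul_le_mul_of_nonneg_right hNinv
            (Finset.sum_nonneg fun s _ => Finset.sum_nonneg fun q _ => ha0 _)
      _ = 2/(M:ℝ) * ∑ s ∈ Finset.range M, ((n:ℝ)⁻¹ * ∑ q ∈ Finset.range n, a (q*M+s)) := by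
          rw [Finset.mul_sum, Finset.mul_sum]
          apply Finset.sum_congr rfl
          intro s _
          ring
      _ ≤ 2/(M:ℝ) * ∑ s ∈ Finset.range M, (c/4 + (n:ℝ)⁻¹ * a s) := by
          apply mul_le_mul_of_nonneg_left _ (by positivity)
          exact Finset.sum_le_sum fun s hs => (h1 s hs).le
      _ = 2/(M:ℝ) * ((M:ℝ) * (c/4)) + 2/(M:ℝ) * ((n:ℝ)⁻¹ * ∑ s ∈ Finset.range M, a s) := by
          rw [Finset.sum_add_distrib, Finset.sum_const, Finset.card_range, ← Finset.mul_sum,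
            nsmul_eq_mul]
          ring
      _ ≤ c/2 + c/4 := by
          have he : 2/(M:ℝ) * ((M:ℝ) * (c/4)) = c/2 := by field_simp; ring
          rw [he]
          linarith
      _ = 3*c/4 := by ring
  have hfinal : limsup A atTop ≤ 3*c/4 :=
    limsup_le_of_le (cob A fun n => avg_nonneg a ha0 n) hfin
  linarith
end

section
/- If F is a surjective chain transitive non-autonomous system with the shadowing property, then F is transitive. -/
open Filter

/-- The composition `F_{[j, j+n-1]} = f_{j+n-1} ∘ ⋯ ∘ f_j`. -/
def seg {X : Type*} (f : ℕ → X → X) (j : ℕ) : ℕ → X → X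
  | 0 => id
  | n + 1 => f (j + n) ∘ seg f j n

/-- Transitivity of a non-autonomous system. -/
def TransitiveNAS {X : Type*} [MetricSpace X] (f : ℕ → X → X) : Prop :=
  ∀ U V : Set X, IsOpen U → IsOpen V → U.Nonempty → V.Nonempty →
    ∃ n : ℕ, 0 < n ∧ ∀ i : ℕ, 1 ≤ i → ((seg f i n '' U) ∩ V).Nonempty

/-- `x R_δ y`. -/
def ChainRel {X : Type*} [MetricSpace X] (f : ℕ → X → X) (δ : ℝ) (x y : X) : Prop :=
  ∃ n : ℕ, 0 < n ∧ ∀ j : ℕ, 1 ≤ j → ∃ ch : ℕ → X, ch 0 = x ∧ ch n = y ∧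
    ∀ i < n, dist (f (j + i) (ch i)) (ch (i + 1)) < δ

/-- Chain transitivity of a non-autonomous system. -/
def ChainTransitiveNAS {X : Type*} [MetricSpace X] (f : ℕ → X → X) : Prop :=
  ∀ δ > (0:ℝ), ∀ x y : X, ChainRel f δ x y ∧ ChainRel f δ y x

/-- The shadowing property. -/
def Shadowing {X : Type*} [MetricSpace X] (f : ℕ → X → X) : Prop :=
  ∀ ε > (0:ℝ), ∃ δ > (0:ℝ), ∀ x : ℕ → X,
    (∀ n : ℕ, dist (f (n + 1) (x n)) (x (n + 1)) < δ) →
    ∃ z : X, ∀ n : ℕ, dist (iterN f n z) (x n) < ε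


lemma seg_iterN {X : Type*} (f : ℕ → X → X) :
    ∀ (n j : ℕ) (z : X), seg f (j+1) n (iterN f j z) = iterN f (j+n) z
  | 0, j, z => rfl
  | n+1, j, z => by
    show f (j+1+n) (seg f (j+1) n (iterN f j z)) = iterN f (j+n+1) z
    rw [seg_iterN f n j z, show j+1+n = j+n+1 by omega]
    rfl

theorem stmt9 {X : Type*} [MetricSpace X] (f : ℕ → X → X)
    (hf : ∀ i, Continuous (f i)) (hsurj : ∀ i, Function.Surjective (f i))
    (hct : ChainTransitiveNAS f) (hsh : Shadowing f) :
    TransitiveNAS f := by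
  intro U V hU hV ⟨u, hu⟩ ⟨v, hv⟩
  obtain ⟨ε1, hε1, hball1⟩ := Metric.isOpen_iff.1 hU u hu
  obtain ⟨ε2, hε2, hball2⟩ := Metric.isOpen_iff.1 hV v hv
  set ε := min ε1 ε2 with hεdef
  have hε : 0 < ε := lt_min hε1 hε2
  obtain ⟨δ, hδ, hshad⟩ := hsh ε hε
  obtain ⟨⟨n, hn, hchain⟩, -⟩ := hct δ hδ u v
  refine ⟨n, hn, ?_⟩
  intro i hi
  obtain ⟨p, rfl⟩ : ∃ p, i = p + 1 := ⟨i - 1, by omega⟩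
  obtain ⟨ch, hch0, hchn, hchd⟩ := hchain (p+1) hi
  have hpre : ∀ k x, ∃ y, f k y = x := fun k x => hsurj k x
  choose pre hpre using hpre
  -- backward orbit ending at u at time p
  let g : ℕ → X := fun t => Nat.rec u (fun t gt => pre (p - t) gt) t
  have hg0 : g 0 = u := rfl
  have hgs : ∀ t, f (p - t) (g (t+1)) = g t := fun t => hpre (p - t) (g t)
  -- forward orbit starting at v at time p + n
  let h : ℕ → X := fun t => Nat.rec v (fun t ht => f (p+1+n+t) ht) t
  have hh0 : h 0 = v := rfl
  have hhs : ∀ t, h (t+1) = f (p+1+n+t) (h t) := fun t => rfl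
  -- the pseudo-orbit
  set x : ℕ → X := fun m =>
    if m < p + n then (if m ≤ p then g (p - m) else ch (m - p))
    else h (m - (p+n)) with hxdef
  have hxg : ∀ m ≤ p, x m = g (p - m) := by
    intro m hm
    simp only [hxdef]
    rw [if_pos (by omega), if_pos hm]
  have hxc : ∀ m, p ≤ m → m ≤ p + n → x m = ch (m - p) := by
    intro m hm1 hm2
    simp only [hxdef]
    rcases lt_or_eq_of_le hm2 with hlt | heq
    · rw [if_pos hlt]
      rcases lt_or_eq_of_le hm1 with hlt2 | heq2
      · rw [if_neg (by omega)]
      · rw [if_pos (by omega), ← heq2]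
        simp [hg0, hch0]
    · rw [if_neg (by omega), heq]
      simp [hh0, hchn]
  have hxh : ∀ m, p + n ≤ m → x m = h (m - (p+n)) := by
    intro m hm
    simp only [hxdef]
    rw [if_neg (by omega)]
  have hpo : ∀ m, dist (f (m + 1) (x m)) (x (m + 1)) < δ := by
    intro m
    rcases lt_trichotomy m p with hm | hm | hm
    · -- backward orbit part
      rw [hxg m (by omega), hxg (m+1) (by omega)]
      have := hgs (p - m - 1)
      rw [show p - (p - m - 1) = m + 1 by omega,
          show p - m - 1 + 1 = p - m by omega] at this
      rw [this, show p - (m+1) = p - m - 1 by omega]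
      simpa using hδ
    · -- chain part
      subst hm
      rw [hxg m le_rfl, hxc (m+1) (by omega) (by omega)]
      have := hchd 0 hn
      simpa [hg0, hch0, Nat.sub_self, show m + 1 - m = 1 by omega] using this
    · rcases lt_or_ge m (p + n) with hm2 | hm2
      · -- chain part
        rw [hxc m (by omega) (by omega), hxc (m+1) (by omega) (by omega)]
        have := hchd (m - p) (by omega)
        rw [show p + 1 + (m - p) = m + 1 by omega,
            show m - p + 1 = m + 1 - p by omega] at this
        exact this
      · -- forward orbit part
        rw [hxh m hm2, hxh (m+1) (by omega)]
        rw [show m + 1 - (p + n) = (m - (p+n)) + 1 by omega, hhs (m - (p+n)),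
            show p + 1 + n + (m - (p + n)) = m + 1 by omega]
        simpa using hδ
  obtain ⟨z, hz⟩ := hshad x hpo
  have h1 : iterN f p z ∈ U := by
    apply hball1
    have := hz p
    rw [hxg p le_rfl, Nat.sub_self, hg0] at this
    exact Metric.mem_ball.2 (lt_of_lt_of_le this (min_le_left _ _))
  have h2 : iterN f (p + n) z ∈ V := by
    apply hball2
    have := hz (p + n)
    rw [hxc (p+n) (by omega) le_rfl, Nat.add_sub_cancel_left, hchn] at this
    exact Metric.mem_ball.2 (lt_of_lt_of_le this (min_le_right _ _))
  exact ⟨iterN f (p+n) z, ⟨iterN f p z, h1, seg_iterN f n p z⟩, h2⟩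
end

section
/- Let F = ⟨f⟩ be an autonomous chain transitive system on a compact metric space. Then F has the almost shadowing property if and only if f has the shadowing property. -/
open Filter

theorem stmt10 {X : Type*} [MetricSpace X] [CompactSpace X] (f : X → X)
    (hf : Continuous f)
    (hct : ∀ δ > (0:ℝ), ∀ x y : X, ∃ n : ℕ, 0 < n ∧ ∃ ch : ℕ → X,
      ch 0 = x ∧ ch n = y ∧ ∀ i < n, dist (f (ch i)) (ch (i + 1)) < δ) :
    (∀ ε > (0:ℝ), ∃ δ > (0:ℝ), ∀ x : ℕ → X,
        (∀ n : ℕ, dist (f (x n)) (x (n + 1)) < δ) →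
        ∃ z : X, dist z (x 0) < ε ∧ limsup (fun n => dist (f^[n] z) (x n)) atTop < ε) ↔
    (∀ ε > (0:ℝ), ∃ δ > (0:ℝ), ∀ x : ℕ → X,
        (∀ n : ℕ, dist (f (x n)) (x (n + 1)) < δ) →
        ∃ z : X, ∀ n : ℕ, dist (f^[n] z) (x n) < ε) := by
  -- boundedness of the space
  obtain ⟨C, hC⟩ : ∃ C : ℝ, ∀ a b : X, dist a b ≤ C := by
    obtain ⟨C, hC⟩ := Metric.isBounded_iff.mp
      (isCompact_univ : IsCompact (Set.univ : Set X)).isBounded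
    exact ⟨C, fun a b => hC (Set.mem_univ a) (Set.mem_univ b)⟩
  constructor
  · -- almost shadowing + chain transitivity → shadowing
    intro AS ε hε
    obtain ⟨δ, hδ, hAS⟩ := AS (ε/2) (by linarith)
    refine ⟨δ, hδ, ?_⟩
    intro x hx
    -- finite shadowing
    have hfin : ∀ k : ℕ, ∃ w : X, ∀ i ≤ k, dist (f^[i] w) (x i) < ε/2 := by
      intro k
      obtain ⟨n, hn, ch, hch0, hchn, hch⟩ := hct δ hδ (x k) (x 0)
      set p := k + n with hp
      have hp0 : 0 < p := by omega
      have hkp : k < p := by omega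
      set y : ℕ → X := fun m => if m % p < k then x (m % p) else ch (m % p - k) with hy
      have hyx : ∀ m i, i ≤ k → m % p = i → y m = x i := by
        intro m i hik hm
        simp only [hy, hm]
        rcases lt_or_eq_of_le hik with h | h
        · simp [h]
        · subst h; simp [lt_irrefl, hch0]
      have hsucc : ∀ m : ℕ, (m + 1) % p = if m % p + 1 = p then 0 else m % p + 1 := by
        intro m
        have h1 : (m + 1) % p = (m % p + 1) % p := by
          conv_lhs => rw [Nat.add_mod]
          rcases Nat.lt_or_ge 1 p with h | h
          · rw [Nat.mod_eq_of_lt h]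
          · have hp1 : p = 1 := by omega
            simp [hp1]
        rw [h1]
        split
        · next h => rw [h, Nat.mod_self]
        · next h =>
            have : m % p + 1 < p := by
              have := Nat.mod_lt m hp0
              omega
            exact Nat.mod_eq_of_lt this
      have hyp : ∀ m, dist (f (y m)) (y (m+1)) < δ := by
        intro m
        have hr : m % p < p := Nat.mod_lt _ hp0
        rcases Nat.lt_or_ge (m % p + 1) p with hcase | hcase
        · -- residue of m+1 is m%p+1
          have h1 : (m + 1) % p = m % p + 1 := by rw [hsucc m]; simp [Nat.ne_of_lt hcase]
          rcases Nat.lt_or_ge (m % p) k with hk1 | hk1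
          · -- y m = x (m%p), y (m+1) = x (m%p+1) (possibly via ch 0)
            have e1 : y m = x (m % p) := by simp [hy, hk1]
            have e2 : y (m + 1) = x (m % p + 1) := hyx (m+1) (m % p + 1) (by omega) h1
            rw [e1, e2]; exact hx (m % p)
          · -- y m = ch (m%p - k), y (m+1) = ch (m%p - k + 1)
            have e1 : y m = ch (m % p - k) := by simp [hy, Nat.not_lt.mpr hk1]
            have e2 : y (m + 1) = ch (m % p - k + 1) := by
              have hnk : ¬ (m + 1) % p < k := by omega
              show (if (m+1) % p < k then x ((m+1) % p) else ch ((m+1) % p - k))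
                  = ch (m % p - k + 1)
              rw [if_neg hnk, h1]
              congr 1
              omega
            rw [e1, e2]
            exact hch (m % p - k) (by omega)
        · -- wrap around: m%p + 1 = p, residue of m+1 is 0
          have hpe : m % p + 1 = p := by omega
          have h1 : (m + 1) % p = 0 := by rw [hsucc m]; simp [hpe]
          have e2 : y (m + 1) = x 0 := hyx (m+1) 0 (Nat.zero_le _) h1
          have hk1 : k ≤ m % p := by omega
          have e1 : y m = ch (n - 1) := by
            simp only [hy, Nat.not_lt.mpr hk1, if_false]
            congr 1; omega
          rw [e1, e2, ← hchn]
          have : n - 1 + 1 = n := by omega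
          rw [← this]
          exact hch (n - 1) (by omega)
      obtain ⟨z, hz0, hzl⟩ := hAS y hyp
      have hbdd : IsBoundedUnder (· ≤ ·) atTop (fun m => dist (f^[m] z) (y m)) :=
        isBoundedUnder_of ⟨C, fun m => hC _ _⟩
      have hev : ∀ᶠ m in atTop, dist (f^[m] z) (y m) < ε/2 :=
        eventually_lt_of_limsup_lt hzl hbdd
      obtain ⟨N, hN⟩ := eventually_atTop.mp hev
      refine ⟨f^[N * p] z, ?_⟩
      intro i hi
      have e1 : f^[i] (f^[N * p] z) = f^[N * p + i] z := by
        rw [← Function.iterate_add_apply, Nat.add_comm]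
      have e2 : y (N * p + i) = x i := by
        apply hyx _ i hi
        rw [Nat.add_comm, Nat.add_mul_mod_self_right]
        exact Nat.mod_eq_of_lt (by omega)
      rw [e1, ← e2]
      exact hN (N * p + i) (le_trans (Nat.le_mul_of_pos_right N hp0) (Nat.le_add_right _ _))
    -- compactness: pass to a limit of the finite shadowing points
    choose w hw using hfin
    obtain ⟨z, φ, hφ, hφt⟩ := CompactSpace.tendsto_subseq w
    refine ⟨z, fun m => ?_⟩
    have hle : dist (f^[m] z) (x m) ≤ ε/2 := by
      have htd : Tendsto (fun j => dist (f^[m] (w (φ j))) (x m)) atTop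
          (nhds (dist (f^[m] z) (x m))) := by
        exact (Tendsto.dist (((hf.iterate m).continuousAt).tendsto.comp hφt) tendsto_const_nhds)
      refine le_of_tendsto htd ?_
      filter_upwards [eventually_ge_atTop m] with j hj
      exact le_of_lt (hw (φ j) m (le_trans hj (hφ.le_apply)))
    linarith
  · -- shadowing → almost shadowing
    intro SH ε hε
    obtain ⟨δ, hδ, hSH⟩ := SH (ε/2) (by linarith)
    refine ⟨δ, hδ, ?_⟩
    intro x hx
    obtain ⟨z, hz⟩ := hSH x hx
    refine ⟨z, ?_, ?_⟩
    · have := hz 0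
      simpa using lt_trans this (by linarith)
    · have hco : IsCoboundedUnder (· ≤ ·) atTop (fun n => dist (f^[n] z) (x n)) :=
        isCoboundedUnder_le_of_le atTop (x := 0) fun n => dist_nonneg
      have h1 : limsup (fun n => dist (f^[n] z) (x n)) atTop ≤ ε/2 :=
        limsup_le_of_le hco (Eventually.of_forall fun n => le_of_lt (hz n))
      linarith
end

section
/- Topological stability of commutative non-autonomous systems is a uniform dynamical property: if F on X and H on Y are uniformly conjugate commutative non-autonomous systems, then F is topologically stable if and only if H is topologically stable. -/
open Filter

/-- The metric `γ` on non-autonomous systems: `γ(F,G) = sup_i sup_x min(d(f_i x, g_i x), 1)`. -/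
noncomputable def gammaDist {X : Type*} [MetricSpace X] (f g : ℕ → X → X) : ℝ :=
  ⨆ i : ℕ, ⨆ x : X, min (dist (f i x) (g i x)) 1

/-- A commutative non-autonomous system. -/
def CommutNAS {X : Type*} (f : ℕ → X → X) : Prop :=
  ∀ i j : ℕ, ∀ x : X, f i (f j x) = f j (f i x)

/-- Topological stability of a commutative non-autonomous system. -/
def TopStable {X : Type*} [MetricSpace X] (f : ℕ → X → X) : Prop :=
  ∀ ε > (0:ℝ), ∃ δ > (0:ℝ), ∀ g : ℕ → X → X, CommutNAS g →
    (∀ i, UniformContinuous (g i)) → gammaDist f g < δ →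
    ∃ k : X → X, Continuous k ∧ (∀ i x, f i (k x) = k (g i x)) ∧ ∀ x, dist (k x) x < ε

lemma gamma_le {X : Type*} [MetricSpace X] (f g : ℕ → X → X) {c : ℝ} (hc : 0 ≤ c)
    (H : ∀ i x, dist (f i x) (g i x) ≤ c) : gammaDist f g ≤ c :=
  Real.iSup_le (fun i => Real.iSup_le
    (fun x => le_trans (min_le_left _ _) (H i x)) hc) hc

lemma le_gamma {X : Type*} [MetricSpace X] (f g : ℕ → X → X) (i : ℕ) (x : X) :
    min (dist (f i x) (g i x)) 1 ≤ gammaDist f g := by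
  have h2 : min (dist (f i x) (g i x)) 1 ≤ ⨆ y : X, min (dist (f i y) (g i y)) 1 := by
    refine le_ciSup (f := fun y : X => min (dist (f i y) (g i y)) 1) ⟨1, ?_⟩ x
    rintro r ⟨y, rfl⟩
    exact min_le_right _ _
  refine h2.trans (le_ciSup (f := fun n : ℕ => ⨆ y : X, min (dist (f n y) (g n y)) 1) ⟨1, ?_⟩ i)
  rintro r ⟨n, rfl⟩
  exact Real.iSup_le (fun y => min_le_right _ _) zero_le_one

lemma topStable_of_conj {X Y : Type*} [MetricSpace X] [MetricSpace Y]
    (f : ℕ → X → X) (h : ℕ → Y → Y)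
    (j : Y ≃ X) (hj : UniformContinuous (j : Y → X))
    (hjinv : UniformContinuous (j.symm : X → Y))
    (hconj : ∀ i y, f i (j y) = j (h i y))
    (hf : TopStable f) : TopStable h := by
  intro ε hε
  obtain ⟨ε', hε', hε'imp⟩ := Metric.uniformContinuous_iff.1 hjinv ε hε
  obtain ⟨δ', hδ', hstab⟩ := hf ε' hε'
  obtain ⟨δ, hδ, hδimp⟩ := Metric.uniformContinuous_iff.1 hj (min δ' 1 / 2)
    (by positivity)
  refine ⟨min δ 1, by positivity, fun g hgc hgu hγ => ?_⟩
  set G : ℕ → X → X := fun i x => j (g i (j.symm x)) with hG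
  have hdist : ∀ i y, dist (h i y) (g i y) < δ := by
    intro i y
    have hm : min (dist (h i y) (g i y)) 1 < min δ 1 :=
      lt_of_le_of_lt (le_gamma h g i y) hγ
    by_contra hcon
    push_neg at hcon
    exact absurd hm (not_lt.2 (min_le_min hcon le_rfl))
  have hγFG : gammaDist f G < δ' := by
    have hle : gammaDist f G ≤ min δ' 1 / 2 := by
      refine gamma_le f G (by positivity) (fun i x => ?_)
      have hx : f i x = j (h i (j.symm x)) := by
        conv_lhs => rw [← j.apply_symm_apply x]
        exact hconj i (j.symm x)
      rw [hx]
      exact le_of_lt (hδimp (hdist i (j.symm x)))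
    calc gammaDist f G ≤ min δ' 1 / 2 := hle
      _ ≤ δ' / 2 := by gcongr; exact min_le_left _ _
      _ < δ' := by linarith
  have hGc : CommutNAS G := by
    intro i i' x
    simp only [hG, Equiv.symm_apply_apply]
    rw [hgc]
  have hGu : ∀ i, UniformContinuous (G i) :=
    fun i => hj.comp ((hgu i).comp hjinv)
  obtain ⟨k, hkc, hkconj, hkd⟩ := hstab G hGc hGu hγFG
  refine ⟨fun y => j.symm (k (j y)),
    hjinv.continuous.comp (hkc.comp hj.continuous), fun i y => ?_, fun y => ?_⟩
  · have h1 : h i (j.symm (k (j y))) = j.symm (f i (k (j y))) := by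
      have := hconj i (j.symm (k (j y)))
      rw [j.apply_symm_apply] at this
      rw [this, j.symm_apply_apply]
    rw [h1, hkconj i (j y)]
    simp only [hG, Equiv.symm_apply_apply]
  · have := hε'imp (show dist (k (j y)) (j y) < ε' from hkd (j y))
    rwa [j.symm_apply_apply] at this

theorem stmt11 {X Y : Type*} [MetricSpace X] [MetricSpace Y]
    (f : ℕ → X → X) (h : ℕ → Y → Y)
    (hfc : CommutNAS f) (hhc : CommutNAS h)
    (hfu : ∀ i, UniformContinuous (f i)) (hhu : ∀ i, UniformContinuous (h i))
    (j : Y ≃ X) (hj : UniformContinuous (j : Y → X))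
    (hjinv : UniformContinuous (j.symm : X → Y))
    (hconj : ∀ i y, f i (j y) = j (h i y)) :
    TopStable f ↔ TopStable h := by
  have hconj' : ∀ i x, h i (j.symm x) = j.symm (f i x) := by
    intro i x
    have := hconj i (j.symm x)
    rw [j.apply_symm_apply] at this
    rw [this, j.symm_apply_apply]
  constructor
  · exact topStable_of_conj f h j hj hjinv hconj
  · refine topStable_of_conj h f j.symm hjinv ?_ hconj'
    simpa using hj
end

section
/- Let F be a recurrently expansive non-autonomous system with expansive constant c on a metric space in which every closed bounded ball of finite radius is compact. Then for every x₀ ∈ X and λ > 0 there exists N > 0 such that if d(F_n(x₀), F_n(x)) ≤ c for all 0 ≤ n ≤ N, then d(x₀, x) < λ. -/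
open Filter

lemma iterN_continuous {X : Type*} [MetricSpace X] (f : ℕ → X → X)
    (hf : ∀ i, Continuous (f i)) : ∀ n, Continuous (iterN f n)
  | 0 => continuous_id
  | n + 1 => (hf (n + 1)).comp (iterN_continuous f hf n)

theorem stmt13 {X : Type*} [MetricSpace X]
    (hX : ∀ (x : X) (r : ℝ), IsCompact (Metric.closedBall x r))
    (f : ℕ → X → X) (hf : ∀ i, Continuous (f i))
    (c : ℝ) (hc : c ∈ Set.Ioo (0:ℝ) 1)
    (hrec : ∀ x y : X, x ≠ y →
      c < limsup (fun n => dist (iterN f n x) (iterN f n y)) atTop) :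
    ∀ (x₀ : X), ∀ l > (0:ℝ), ∃ N : ℕ, 0 < N ∧ ∀ x : X,
      (∀ n ≤ N, dist (iterN f n x₀) (iterN f n x) ≤ c) → dist x₀ x < l := by
  intro x₀ l hl
  by_contra h
  push_neg at h
  -- for each N, a witness x with the conditions up to N+1 and l ≤ dist x₀ x
  set V : ℕ → Set X := fun N =>
    {x | (∀ n ≤ N + 1, dist (iterN f n x₀) (iterN f n x) ≤ c) ∧ l ≤ dist x₀ x}
    with hV
  have hne : ∀ N, (V N).Nonempty := by
    intro N
    obtain ⟨x, hx1, hx2⟩ := h (N + 1) (Nat.succ_pos N)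
    exact ⟨x, hx1, hx2⟩
  have hmono : ∀ N, V (N + 1) ⊆ V N := by
    intro N x hx
    exact ⟨fun n hn => hx.1 n (le_trans hn (by omega)), hx.2⟩
  have hclosed : ∀ N, IsClosed (V N) := by
    intro N
    have h1 : IsClosed {x : X | ∀ n ≤ N + 1, dist (iterN f n x₀) (iterN f n x) ≤ c} := by
      have : {x : X | ∀ n ≤ N + 1, dist (iterN f n x₀) (iterN f n x) ≤ c}
          = ⋂ n ∈ Set.Iic (N + 1), {x : X | dist (iterN f n x₀) (iterN f n x) ≤ c} := by
        ext x; simp [Set.mem_iInter]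
      rw [this]
      exact isClosed_biInter fun n _ =>
        isClosed_le (Continuous.dist continuous_const (iterN_continuous f hf n)) continuous_const
    have h2 : IsClosed {x : X | l ≤ dist x₀ x} :=
      isClosed_le continuous_const (Continuous.dist continuous_const continuous_id)
    exact h1.inter h2
  have hcomp : IsCompact (V 0) := by
    refine (hX x₀ c).of_isClosed_subset (hclosed 0) ?_
    intro x hx
    have := hx.1 0 (by omega)
    simpa [iterN, Metric.mem_closedBall, dist_comm] using this
  obtain ⟨x, hx⟩ := IsCompact.nonempty_iInter_of_sequence_nonempty_isCompact_isClosed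
    V hmono hne hcomp hclosed
  simp only [Set.mem_iInter] at hx
  have hall : ∀ n, dist (iterN f n x₀) (iterN f n x) ≤ c := fun n =>
    (hx n).1 n (by omega)
  have hxl : l ≤ dist x₀ x := (hx 0).2
  have hne' : x₀ ≠ x := by
    intro h'; rw [h', dist_self] at hxl; linarith
  have hlim := hrec x₀ x hne'
  have : limsup (fun n => dist (iterN f n x₀) (iterN f n x)) atTop ≤ c := by
    apply limsup_le_of_le
    · exact (isBoundedUnder_of (f := (atTop : Filter ℕ)) (u := fun n => dist (iterN f n x₀) (iterN f n x)) ⟨(0:ℝ), fun n => dist_nonneg⟩).isCoboundedUnder_le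
    · exact Eventually.of_forall hall
  linarith
end

section
/- Let F be a mean expansive non-autonomous system with constant c on a metric space where closed balls of finite radius are compact. For any x₀ ∈ X and λ > 0, there exists N > 0 such that for all x ∈ X, if (1/n)Σ_{i=0}^{n-1} d(F_i(x₀), F_i(x)) ≤ c for all 1 ≤ n ≤ N, then d(x₀, x) < λ. -/
open Filter

section MeanDist

variable {X : Type*} (f : ℕ → X → X)

theorem continuous_iterN [TopologicalSpace X] (hf : ∀ i, Continuous (f i)) :
    ∀ n, Continuous (iterN f n)
  | 0 => continuous_id
  | n + 1 => (hf (n + 1)).comp (continuous_iterN hf n)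

variable [MetricSpace X]

noncomputable def meanDist (n : ℕ) (x y : X) : ℝ :=
  (n : ℝ)⁻¹ * ∑ i ∈ Finset.range n, dist (iterN f i x) (iterN f i y)

def MeanExpansive (c : ℝ) : Prop :=
  ∀ x y : X, x ≠ y → c < limsup (fun n => meanDist f n x y) atTop

def meanDistSublevel (c : ℝ) (x₀ : X) (N : ℕ) : Set X :=
  {x | ∀ n : ℕ, 1 ≤ n → n ≤ N → meanDist f n x₀ x ≤ c}

variable {f}

@[simp]
theorem meanDist_one (x y : X) : meanDist f 1 x y = dist x y := by
  simp [meanDist, iterN]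

theorem meanDist_nonneg (n : ℕ) (x y : X) : 0 ≤ meanDist f n x y :=
  mul_nonneg (by positivity) (Finset.sum_nonneg fun _ _ => dist_nonneg)

theorem continuous_meanDist_right (hf : ∀ i, Continuous (f i)) (n : ℕ) (x₀ : X) :
    Continuous (meanDist f n x₀) :=
  continuous_const.mul <| continuous_finsetSum _ fun i _ =>
    continuous_const.dist (continuous_iterN f hf i)

theorem limsup_meanDist_le {c : ℝ} {x y : X} (h : ∀ᶠ n in atTop, meanDist f n x y ≤ c) :
    limsup (fun n => meanDist f n x y) atTop ≤ c :=
  limsup_le_of_le (isBoundedUnder_of ⟨0, fun n => meanDist_nonneg n x y⟩).isCoboundedUnder_le h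

theorem isClosed_meanDistSublevel (hf : ∀ i, Continuous (f i)) (c : ℝ) (x₀ : X) (N : ℕ) :
    IsClosed (meanDistSublevel f c x₀ N) := by
  simp only [meanDistSublevel, Set.ofPred_forall]
  exact isClosed_iInter fun n => isClosed_iInter fun _ => isClosed_iInter fun _ =>
    isClosed_le (continuous_meanDist_right hf n x₀) continuous_const

theorem meanDistSublevel_antitone (c : ℝ) (x₀ : X) : Antitone (meanDistSublevel f c x₀) :=
  fun _ _ hNM _ hx n hn hnN => hx n hn (hnN.trans hNM)

theorem meanDistSublevel_subset_closedBall {c : ℝ} {x₀ : X} {N : ℕ} (hN : 1 ≤ N) :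
    meanDistSublevel f c x₀ N ⊆ Metric.closedBall x₀ c := fun x hx => by
  simpa [dist_comm] using hx 1 le_rfl hN

theorem MeanExpansive.eq_of_mem_iInter_meanDistSublevel {c : ℝ} (hexp : MeanExpansive f c)
    {x₀ x : X} (hx : x ∈ ⋂ N, meanDistSublevel f c x₀ N) : x = x₀ := by
  by_contra hne
  refine (hexp x₀ x (Ne.symm hne)).not_ge (limsup_meanDist_le ?_)
  filter_upwards [eventually_ge_atTop 1] with n hn
  exact Set.mem_iInter.mp hx n n hn le_rfl

end MeanDist

theorem stmt15_general {X : Type*} [MetricSpace X]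
    (hX : ∀ (x : X) (r : ℝ), IsCompact (Metric.closedBall x r))
    (f : ℕ → X → X) (hf : ∀ i, Continuous (f i))
    (c : ℝ)
    (hexp : ∀ x y : X, x ≠ y →
      c < limsup (fun n : ℕ => (n:ℝ)⁻¹ * ∑ i ∈ Finset.range n,
        dist (iterN f i x) (iterN f i y)) atTop) :
    ∀ (x₀ : X), ∀ l > (0:ℝ), ∃ N : ℕ, 0 < N ∧ ∀ x : X,
      (∀ n : ℕ, 1 ≤ n → n ≤ N →
        (n:ℝ)⁻¹ * ∑ i ∈ Finset.range n, dist (iterN f i x₀) (iterN f i x) ≤ c) →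
      dist x₀ x < l := by
  intro x₀ l hl
  set V : ℕ → Set X := fun N => meanDistSublevel f c x₀ (N + 1)
  have hV_compact (N : ℕ) : IsCompact (V N) :=
    (hX x₀ c).of_isClosed_subset (isClosed_meanDistSublevel hf c x₀ _)
      (meanDistSublevel_subset_closedBall N.succ_pos)
  have hV_directed : Directed (· ⊇ ·) V :=
    ((meanDistSublevel_antitone c x₀).comp_monotone fun _ _ h => Nat.succ_le_succ h).directed_ge
  have hV_ball : ∀ x ∈ ⋂ N, V N, Metric.ball x₀ l ∈ nhds x := fun x hx => by
    have hx' : x ∈ ⋂ N, meanDistSublevel f c x₀ N := Set.mem_iInter.mpr fun N =>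
      meanDistSublevel_antitone c x₀ N.le_succ (Set.mem_iInter.mp hx N)
    rw [MeanExpansive.eq_of_mem_iInter_meanDistSublevel hexp hx']
    exact Metric.ball_mem_nhds x₀ hl
  obtain ⟨N, hN⟩ := exists_subset_nhds_of_isCompact hV_directed hV_compact hV_ball
  exact ⟨N + 1, N.succ_pos, fun x hx => by simpa [dist_comm] using hN hx⟩

theorem stmt15 {X : Type*} [MetricSpace X]
    (hX : ∀ (x : X) (r : ℝ), IsCompact (Metric.closedBall x r))
    (f : ℕ → X → X) (hf : ∀ i, Continuous (f i))
    (c : ℝ) (hc : c ∈ Set.Ioo (0:ℝ) 1)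
    (hexp : ∀ x y : X, x ≠ y →
      c < limsup (fun n : ℕ => (n:ℝ)⁻¹ * ∑ i ∈ Finset.range n,
        dist (iterN f i x) (iterN f i y)) atTop) :
    ∀ (x₀ : X), ∀ l > (0:ℝ), ∃ N : ℕ, 0 < N ∧ ∀ x : X,
      (∀ n : ℕ, 1 ≤ n → n ≤ N →
        (n:ℝ)⁻¹ * ∑ i ∈ Finset.range n, dist (iterN f i x₀) (iterN f i x) ≤ c) →
      dist x₀ x < l :=
  stmt15_general hX f hf c hexp
end

section
/- Every expansive autonomous system (positively expansive continuous map) with the shadowing property on a compact metric space is topologically stable: for every ε > 0 there is δ > 0 such that if g is continuous with sup_x d(f(x), g(x)) < δ, there exists a continuous k : X → X with f ∘ k = k ∘ g and d(k(x), x) < ε for all x. -/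
open Filter Topology

theorem stmt19 {X : Type*} [MetricSpace X] [CompactSpace X] (f : X → X)
    (hf : Continuous f)
    (hexp : ∃ c ∈ Set.Ioo (0:ℝ) 1, ∀ x y : X, x ≠ y →
      ∃ n : ℕ, c < dist (f^[n] x) (f^[n] y))
    (hsh : ∀ ε > (0:ℝ), ∃ δ > (0:ℝ), ∀ x : ℕ → X,
      (∀ n : ℕ, dist (f (x n)) (x (n + 1)) < δ) →
      ∃ z : X, ∀ n : ℕ, dist (f^[n] z) (x n) < ε) :
    ∀ ε > (0:ℝ), ∃ δ > (0:ℝ), ∀ g : X → X, Continuous g →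
      (∀ x, dist (f x) (g x) < δ) →
      ∃ k : X → X, Continuous k ∧ (∀ x, f (k x) = k (g x)) ∧ ∀ x, dist (k x) x < ε := by
  obtain ⟨c, ⟨hc0, hc1⟩, hexp⟩ := hexp
  intro ε hε
  set ε₀ := min ε (c / 2) with hε₀def
  have hε₀ : 0 < ε₀ := lt_min hε (by linarith)
  obtain ⟨δ, hδ0, hδ⟩ := hsh ε₀ hε₀
  refine ⟨δ, hδ0, fun g hg hfg => ?_⟩
  have horb : ∀ x : X, ∃ z, ∀ n, dist (f^[n] z) (g^[n] x) < ε₀ := by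
    intro x
    apply hδ (fun n => g^[n] x)
    intro n
    rw [Function.iterate_succ_apply']
    exact hfg _
  choose k hk using horb
  have hle : ε₀ ≤ c / 2 := min_le_right _ _
  have huniq : ∀ (x z z' : X), (∀ n, dist (f^[n] z) (g^[n] x) ≤ c / 2) →
      (∀ n, dist (f^[n] z') (g^[n] x) ≤ c / 2) → z = z' := by
    intro x z z' h1 h2
    by_contra hne
    obtain ⟨n, hn⟩ := hexp z z' hne
    have := dist_triangle (f^[n] z) (g^[n] x) (f^[n] z')
    rw [dist_comm (g^[n] x)] at this
    have h1n := h1 n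
    have h2n := h2 n
    linarith
  have hlim : ∀ (u : ℕ → X) (x w : X), Tendsto u atTop (𝓝 x) →
      Tendsto (fun j => k (u j)) atTop (𝓝 w) → w = k x := by
    intro u x w hu hw
    refine huniq x w (k x) (fun n => ?_) (fun n => (hk x n).le.trans hle)
    have h1 : Tendsto (fun j => dist (f^[n] (k (u j))) (g^[n] (u j))) atTop
        (𝓝 (dist (f^[n] w) (g^[n] x))) :=
      Tendsto.dist (((hf.iterate n).tendsto w).comp hw) (((hg.iterate n).tendsto x).comp hu)
    exact le_of_tendsto h1 (Eventually.of_forall fun j => (hk (u j) n).le.trans hle)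
  refine ⟨k, ?_, ?_, ?_⟩
  · rw [continuous_iff_seqContinuous]
    intro u x hu
    apply tendsto_of_subseq_tendsto
    intro ns hns
    obtain ⟨w, φ, hφ, hwt⟩ := CompactSpace.tendsto_subseq (fun j => k (u (ns j)))
    have hw : w = k x :=
      hlim (fun j => u (ns (φ j))) x w (hu.comp (hns.comp hφ.tendsto_atTop)) hwt
    exact ⟨φ, hw ▸ hwt⟩
  · intro x
    refine huniq (g x) (f (k x)) (k (g x)) (fun n => ?_) (fun n => (hk (g x) n).le.trans hle)
    have := (hk x (n + 1)).le.trans hle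
    rw [← Function.iterate_succ_apply f, ← Function.iterate_succ_apply g]
    exact this
  · intro x
    have := hk x 0
    simp only [Function.iterate_zero, id] at this
    exact this.trans_le (min_le_left _ _)
end
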